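/- Let μ be a Borel probability measure on SL(2,ℝ) and let ν̄ be a locally finite Borel measure on ℝ² \ {0} that is μ-stationary (μ * ν̄ = ν̄). Suppose the pushforward of ν̄ under x ↦ (|x|, [x]) ∈ (0,∞) × ℙ¹(ℝ) equals the product of the measure dr/r on (0,∞) (dr the Lebesgue measure) with a Borel probability measure ν on ℙ¹(ℝ). Then ν is μ-stationary for the projective action: ∫ g_*ν dμ(g) = ν. -/
import Mathlib


open MeasureTheory Filter Topology Matrix
open scoped MatrixGroups

noncomputable section

namespace PlaneRW

instance : TopologicalSpace SL(2, ℝ) :=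
  TopologicalSpace.induced (fun g : SL(2, ℝ) => (g : Matrix (Fin 2) (Fin 2) ℝ)) inferInstance

instance : MeasurableSpace SL(2, ℝ) := borel _
instance : BorelSpace SL(2, ℝ) := ⟨rfl⟩

/-- The Euclidean (Frobenius) norm of a real 2×2 matrix. -/
def matNorm (g : SL(2, ℝ)) : ℝ :=
  Real.sqrt (∑ i : Fin 2, ∑ j : Fin 2, ((g : Matrix (Fin 2) (Fin 2) ℝ) i j) ^ 2)

/-- The Euclidean norm of a vector in `ℝ²`. -/
def vecNorm (x : Fin 2 → ℝ) : ℝ := Real.sqrt (x 0 ^ 2 + x 1 ^ 2)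

/-- The `n`-fold convolution power of a measure on `SL(2,ℝ)`, with `μ^{*0} = δ_1`. -/
def convPow (μ : Measure SL(2, ℝ)) : ℕ → Measure SL(2, ℝ)
  | 0 => Measure.dirac 1
  | n + 1 => (convPow μ n).mconv μ

/-- The support of a measure: points all of whose open neighbourhoods have positive mass. -/
def msupport (μ : Measure SL(2, ℝ)) : Set SL(2, ℝ) :=
  {g | ∀ U : Set SL(2, ℝ), IsOpen U → g ∈ U → μ U ≠ 0}

/-- `G_μ`: the closed semigroup generated by the support of `μ`. -/
def Gmu (μ : Measure SL(2, ℝ)) : Set SL(2, ℝ) :=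
  closure (Subsemigroup.closure (msupport μ) : Set SL(2, ℝ))

/-- `μ` has a finite exponential moment: `∫ ‖g‖^α dμ(g) < ∞` for some `α > 0`. -/
def FiniteExpMoment (μ : Measure SL(2, ℝ)) : Prop :=
  ∃ α : ℝ, 0 < α ∧ (∫⁻ g, ENNReal.ofReal (matNorm g ^ α) ∂μ) < ⊤

/-- A set `T ⊆ SL(2,ℝ)` is strongly irreducible if no nonempty finite union of proper nonzero
subspaces of `ℝ²` is invariant under every element of `T`. -/
def StronglyIrreducible (T : Set SL(2, ℝ)) : Prop :=
  ¬ ∃ s : Finset (Submodule ℝ (Fin 2 → ℝ)), s.Nonempty ∧ (∀ W ∈ s, W ≠ ⊥ ∧ W ≠ ⊤) ∧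
      ∀ g ∈ T, ∀ x ∈ ⋃ W ∈ s, (W : Set (Fin 2 → ℝ)),
        (g : Matrix (Fin 2) (Fin 2) ℝ).mulVec x ∈ ⋃ W ∈ s, (W : Set (Fin 2 → ℝ))

/-- `T ⊆ SL(2,ℝ)` is unbounded in norm. -/
def IsUnboundedSet (T : Set SL(2, ℝ)) : Prop := ∀ R : ℝ, ∃ g ∈ T, R < matNorm g

/-- The real projective line, as the projectivization of `ℝ²`. -/
abbrev Proj := Projectivization ℝ (Fin 2 → ℝ)

instance : MeasurableSpace Proj :=
  inferInstanceAs (MeasurableSpace (Quotient (projectivizationSetoid ℝ (Fin 2 → ℝ))))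

lemma toLin'_injective (g : SL(2, ℝ)) :
    Function.Injective (Matrix.toLin' (g : Matrix (Fin 2) (Fin 2) ℝ)) := by
  have h : (Matrix.toLin' ((g⁻¹ : SL(2, ℝ)) : Matrix (Fin 2) (Fin 2) ℝ)).comp
      (Matrix.toLin' (g : Matrix (Fin 2) (Fin 2) ℝ)) = LinearMap.id := by
    rw [← Matrix.toLin'_mul, ← Matrix.SpecialLinearGroup.coe_mul]
    simp
  intro x y hxy
  have hx := DFunLike.congr_fun h x
  have hy := DFunLike.congr_fun h y
  simp only [LinearMap.comp_apply, LinearMap.id_apply] at hx hy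
  rw [← hx, ← hy, hxy]

/-- The projective action of `SL(2,ℝ)` on the real projective line. -/
def projAct (g : SL(2, ℝ)) : Proj → Proj :=
  Projectivization.map (Matrix.toLin' (g : Matrix (Fin 2) (Fin 2) ℝ)) (toLin'_injective g)

/-- The polar-coordinates map `x ↦ (|x|, [x]) ∈ (0,∞) × ℙ¹(ℝ)` (junk value at `0`). -/
def polarMap (x : Fin 2 → ℝ) : ℝ × Proj :=
  if h : x = 0 then
    (0, Projectivization.mk ℝ ![1, 0] (by
      intro hc
      have := congrFun hc 0
      norm_num at this))
  else (vecNorm x, Projectivization.mk ℝ x h)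

/-- The measure `dr/r` on `(0,∞)`. -/
def drr : Measure ℝ :=
  (MeasureTheory.volume.restrict (Set.Ioi (0 : ℝ))).withDensity fun r => ENNReal.ofReal r⁻¹

/-- The convolution `μ * ν` of a measure on `SL(2,ℝ)` with a measure on `ℙ¹(ℝ)`, i.e.
`∫ g_* ν dμ(g)`. -/
def projConv (μ : Measure SL(2, ℝ)) (ν : Measure Proj) : Measure Proj :=
  Measure.map (fun p : SL(2, ℝ) × Proj => projAct p.1 p.2) (μ.prod ν)

/-- The convolution `μ * ν̄` of a measure on `SL(2,ℝ)` with a measure on `ℝ²`, i.e. the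
pushforward of `μ ⊗ ν̄` under `(g, x) ↦ g x`. -/
def planeConv (μ : Measure SL(2, ℝ)) (ν : Measure (Fin 2 → ℝ)) : Measure (Fin 2 → ℝ) :=
  Measure.map (fun p : SL(2, ℝ) × (Fin 2 → ℝ) =>
    (p.1 : Matrix (Fin 2) (Fin 2) ℝ).mulVec p.2) (μ.prod ν)

end PlaneRW

open PlaneRW


namespace AngularAux

open Projectivization Set

lemma vecNorm_nonneg (x : Fin 2 → ℝ) : 0 ≤ vecNorm x := Real.sqrt_nonneg _

lemma vecNorm_zero : vecNorm (0 : Fin 2 → ℝ) = 0 := by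
  simp [vecNorm]

lemma vecNorm_eq_zero_iff {x : Fin 2 → ℝ} : vecNorm x = 0 ↔ x = 0 := by
  constructor
  · intro h
    have h2 : x 0 ^ 2 + x 1 ^ 2 ≤ 0 := by
      by_contra hc
      push_neg at hc
      have := Real.sqrt_pos.mpr hc
      rw [show Real.sqrt (x 0 ^ 2 + x 1 ^ 2) = vecNorm x from rfl, h] at this
      exact lt_irrefl _ this
    have h0 : x 0 = 0 := by nlinarith [sq_nonneg (x 0), sq_nonneg (x 1)]
    have h1 : x 1 = 0 := by nlinarith [sq_nonneg (x 0), sq_nonneg (x 1)]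
    funext i
    fin_cases i <;> simpa
  · rintro rfl; exact vecNorm_zero

lemma vecNorm_pos {x : Fin 2 → ℝ} (hx : x ≠ 0) : 0 < vecNorm x :=
  lt_of_le_of_ne (vecNorm_nonneg x) fun h => hx (vecNorm_eq_zero_iff.mp h.symm)

lemma vecNorm_smul (t : ℝ) (x : Fin 2 → ℝ) : vecNorm (t • x) = |t| * vecNorm x := by
  unfold vecNorm
  simp only [Pi.smul_apply, smul_eq_mul]
  rw [show (t * x 0) ^ 2 + (t * x 1) ^ 2 = t ^ 2 * (x 0 ^ 2 + x 1 ^ 2) by ring,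
    Real.sqrt_mul (sq_nonneg t), Real.sqrt_sq_eq_abs]

lemma measurable_vecNorm : Measurable vecNorm := by
  unfold vecNorm
  exact Real.continuous_sqrt.measurable.comp
    (((measurable_pi_apply 0).pow_const 2).add ((measurable_pi_apply 1).pow_const 2))

lemma mulVec_ne_zero (g : SL(2, ℝ)) {x : Fin 2 → ℝ} (hx : x ≠ 0) :
    (g : Matrix (Fin 2) (Fin 2) ℝ).mulVec x ≠ 0 := by
  intro h
  apply hx
  have := toLin'_injective g (a₁ := x) (a₂ := 0)
  simp only [Matrix.toLin'_apply, map_zero] at this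
  exact this (by simpa using h)

lemma measurable_mv :
    Measurable (fun p : SL(2, ℝ) × (Fin 2 → ℝ) =>
      (p.1 : Matrix (Fin 2) (Fin 2) ℝ).mulVec p.2) := by
  have hcoe : Continuous (fun g : SL(2, ℝ) => (g : Matrix (Fin 2) (Fin 2) ℝ)) :=
    continuous_induced_dom
  have hentry : ∀ i j : Fin 2,
      Measurable (fun g : SL(2, ℝ) => (g : Matrix (Fin 2) (Fin 2) ℝ) i j) := fun i j => by
    exact (hcoe.matrix_elem i j).measurable
  refine measurable_pi_lambda _ fun i => ?_
  simp only [Matrix.mulVec, dotProduct]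
  exact Finset.measurable_sum _ fun j _ =>
    ((hentry i j).comp measurable_fst).mul ((measurable_pi_apply j).comp measurable_snd)

lemma mk_congr {x y : Fin 2 → ℝ} (h : x = y) (hx : x ≠ 0) (hy : y ≠ 0) :
    Projectivization.mk ℝ x hx = Projectivization.mk ℝ y hy := by subst h; rfl

/-- A scale-invariant choice of representative for a nonzero vector. -/
def sec (v : Fin 2 → ℝ) : Fin 2 → ℝ := if v 1 = 0 then ![1, 0] else (v 1)⁻¹ • v

lemma sec_ne_zero (v : Fin 2 → ℝ) : sec v ≠ 0 := by
  unfold sec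
  split
  · intro h
    have := congrFun h 0
    norm_num at this
  · next h =>
    intro hc
    have := congrFun hc 1
    simp only [Pi.smul_apply, smul_eq_mul, Pi.zero_apply] at this
    rw [inv_mul_cancel₀ h] at this
    norm_num at this

lemma sec_smul {t : ℝ} (ht : t ≠ 0) (v : Fin 2 → ℝ) : sec (t • v) = sec v := by
  unfold sec
  have hts : (t • v) 1 = t * v 1 := rfl
  by_cases h1 : v 1 = 0
  · rw [if_pos (by rw [hts, h1, mul_zero]), if_pos h1]
  · rw [if_neg (by rw [hts]; exact mul_ne_zero ht h1), if_neg h1, hts, smul_smul]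
    congr 1
    field_simp

lemma sec_eq_smul (v : Fin 2 → ℝ) (hv : v ≠ 0) : ∃ a : ℝ, a ≠ 0 ∧ sec v = a • v := by
  unfold sec
  by_cases h1 : v 1 = 0
  · have h0 : v 0 ≠ 0 := by
      intro h0
      exact hv (funext fun i => by fin_cases i <;> simp [h0, h1])
    refine ⟨(v 0)⁻¹, inv_ne_zero h0, ?_⟩
    rw [if_pos h1]
    funext i
    fin_cases i <;>
      simp [Pi.smul_apply, smul_eq_mul, h1, inv_mul_cancel₀ h0]
  · exact ⟨(v 1)⁻¹, inv_ne_zero h1, by rw [if_neg h1]⟩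

lemma measurable_sec : Measurable sec := by
  unfold sec
  refine Measurable.ite ?_ measurable_const ?_
  · exact (measurable_pi_apply 1) (measurableSet_singleton 0)
  · refine measurable_pi_lambda _ fun i => ?_
    simp only [Pi.smul_apply, smul_eq_mul]
    exact ((measurable_pi_apply 1).inv).mul (measurable_pi_apply i)

/-- A measurable section of the projectivization. -/
def psec : Proj → (Fin 2 → ℝ) :=
  Projectivization.lift (fun v => sec v.val) (by
    rintro ⟨a, ha⟩ ⟨b, hb⟩ t h
    simp only at h ⊢
    have ht : t ≠ 0 := by
      rintro rfl
      rw [zero_smul] at h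
      exact ha h
    rw [h, sec_smul ht])

lemma psec_mk (v : Fin 2 → ℝ) (hv : v ≠ 0) :
    psec (Projectivization.mk ℝ v hv) = sec v := rfl

lemma measurable_psec : Measurable psec :=
  measurable_from_quotient.mpr (measurable_sec.comp measurable_subtype_coe)

lemma psec_ne_zero (p : Proj) : psec p ≠ 0 := by
  induction p using Projectivization.ind with
  | h v hv => rw [psec_mk]; exact sec_ne_zero v

lemma mk_sec (v : Fin 2 → ℝ) (hv : v ≠ 0) :
    Projectivization.mk ℝ (sec v) (sec_ne_zero v) = Projectivization.mk ℝ v hv := by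
  obtain ⟨a, ha, hsec⟩ := sec_eq_smul v hv
  exact (Projectivization.mk_eq_mk_iff' ℝ _ _ _ _).mpr ⟨a, hsec.symm⟩

lemma ite_ne_zero (y : Fin 2 → ℝ) : (if y = 0 then ![1, 0] else y) ≠ 0 := by
  split
  · intro h
    have := congrFun h 0
    norm_num at this
  · next h => exact h

/-- The angular part of a vector (with a junk value at `0`). -/
def pangle (y : Fin 2 → ℝ) : Proj := Projectivization.mk ℝ _ (ite_ne_zero y)

lemma measurable_pangle : Measurable pangle := by
  refine measurable_quotient_mk''.comp (Measurable.subtype_mk ?_)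
  refine Measurable.ite ?_ measurable_const measurable_id
  rw [Set.setOf_eq_eq_singleton]
  exact measurableSet_singleton 0

lemma pangle_eq (y : Fin 2 → ℝ) (hy : y ≠ 0) : pangle y = Projectivization.mk ℝ y hy :=
  mk_congr (if_neg hy) _ _

lemma polarMap_eq : polarMap = fun x => (vecNorm x, pangle x) := by
  funext x
  by_cases hx : x = 0
  · subst hx
    rw [polarMap, dif_pos rfl]
    refine Prod.ext vecNorm_zero.symm ?_
    exact (mk_congr (if_pos rfl) _ _).symm
  · rw [polarMap, dif_neg hx]
    exact Prod.ext rfl (pangle_eq x hx).symm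

lemma measurable_polarMap : Measurable polarMap := by
  rw [polarMap_eq]
  exact measurable_vecNorm.prodMk measurable_pangle

lemma projAct_mk (g : SL(2, ℝ)) {x : Fin 2 → ℝ} (hx : x ≠ 0) :
    projAct g (Projectivization.mk ℝ x hx) =
      Projectivization.mk ℝ ((g : Matrix (Fin 2) (Fin 2) ℝ).mulVec x) (mulVec_ne_zero g hx) := by
  unfold projAct
  rw [Projectivization.map_mk]
  exact mk_congr (Matrix.toLin'_apply _ _) _ _

lemma projAct_eq_pangle (g : SL(2, ℝ)) (p : Proj) :
    projAct g p = pangle ((g : Matrix (Fin 2) (Fin 2) ℝ).mulVec (psec p)) := by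
  induction p using Projectivization.ind with
  | h v hv =>
    rw [psec_mk, pangle_eq _ (mulVec_ne_zero g (sec_ne_zero v)), ← projAct_mk g (sec_ne_zero v),
      mk_sec v hv]

lemma measurable_projAct (g : SL(2, ℝ)) : Measurable (projAct g) := by
  have : projAct g = fun p => pangle ((g : Matrix (Fin 2) (Fin 2) ℝ).mulVec (psec p)) :=
    funext (projAct_eq_pangle g)
  rw [this]
  exact measurable_pangle.comp
    ((measurable_mv.comp (measurable_const.prodMk measurable_id)).comp measurable_psec)

lemma measurable_Phi :
    Measurable (fun q : SL(2, ℝ) × Proj => projAct q.1 q.2) := by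
  have : (fun q : SL(2, ℝ) × Proj => projAct q.1 q.2)
      = fun q => pangle ((q.1 : Matrix (Fin 2) (Fin 2) ℝ).mulVec (psec q.2)) :=
    funext fun q => projAct_eq_pangle q.1 q.2
  rw [this]
  exact measurable_pangle.comp
    (measurable_mv.comp (measurable_fst.prodMk (measurable_psec.comp measurable_snd)))

/-- The norm-expansion cocycle. -/
def cfun (g : SL(2, ℝ)) (p : Proj) : ℝ :=
  vecNorm ((g : Matrix (Fin 2) (Fin 2) ℝ).mulVec (psec p)) / vecNorm (psec p)

lemma measurable_cfun (g : SL(2, ℝ)) : Measurable (cfun g) := by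
  unfold cfun
  exact ((measurable_vecNorm.comp
      ((measurable_mv.comp (measurable_const.prodMk measurable_id)).comp measurable_psec)).div
    (measurable_vecNorm.comp measurable_psec))

lemma cfun_pos (g : SL(2, ℝ)) (p : Proj) : 0 < cfun g p :=
  div_pos (vecNorm_pos (mulVec_ne_zero g (psec_ne_zero p))) (vecNorm_pos (psec_ne_zero p))

lemma vecNorm_mulVec (g : SL(2, ℝ)) {x : Fin 2 → ℝ} (hx : x ≠ 0) :
    vecNorm ((g : Matrix (Fin 2) (Fin 2) ℝ).mulVec x)
      = vecNorm x * cfun g (Projectivization.mk ℝ x hx) := by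
  obtain ⟨a, ha, hsec⟩ := sec_eq_smul x hx
  unfold cfun
  rw [psec_mk, hsec, Matrix.mulVec_smul, vecNorm_smul, vecNorm_smul]
  have h1 : vecNorm x ≠ 0 := ne_of_gt (vecNorm_pos hx)
  have h2 : |a| ≠ 0 := abs_ne_zero.mpr ha
  field_simp

instance : SFinite drr :=
  inferInstanceAs (SFinite ((MeasureTheory.volume.restrict (Set.Ioi (0:ℝ))).withDensity
    fun r => ENNReal.ofReal r⁻¹))

lemma drr_Ioc {a b : ℝ} (ha : 0 < a) (hab : a ≤ b) :
    drr (Set.Ioc a b) = ENNReal.ofReal (Real.log (b / a)) := by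
  unfold drr
  rw [withDensity_apply _ measurableSet_Ioc, Measure.restrict_restrict measurableSet_Ioc,
    show Set.Ioc a b ∩ Set.Ioi 0 = Set.Ioc a b from
      Set.inter_eq_left.mpr fun x hx => lt_trans ha hx.1]
  have hInt : IntegrableOn (fun r : ℝ => r⁻¹) (Set.Ioc a b) := by
    refine (ContinuousOn.integrableOn_Icc ?_).mono_set Set.Ioc_subset_Icc_self
    exact ContinuousOn.inv₀ continuousOn_id fun x hx => ne_of_gt (lt_of_lt_of_le ha hx.1)
  rw [← ofReal_integral_eq_lintegral_ofReal hInt ?_]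
  · congr 1
    rw [← intervalIntegral.integral_of_le hab, integral_inv]
    rw [Set.uIcc_of_le hab]
    intro h
    exact absurd h.1 (not_le.mpr ha)
  · filter_upwards [ae_restrict_mem measurableSet_Ioc] with r hr
    exact inv_nonneg.mpr (le_of_lt (lt_trans ha hr.1))

lemma one_le_exp_one : (1 : ℝ) ≤ Real.exp 1 :=
  le_trans one_le_two (by linarith [Real.add_one_le_exp (1 : ℝ)])

lemma drr_Ioc_one : drr (Set.Ioc 1 (Real.exp 1)) = 1 := by
  rw [drr_Ioc one_pos one_le_exp_one, div_one, Real.log_exp, ENNReal.ofReal_one]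

lemma drr_scaled {c : ℝ} (hc : 0 < c) :
    drr {r : ℝ | r * c ∈ Set.Ioc 1 (Real.exp 1)} = 1 := by
  have hset : {r : ℝ | r * c ∈ Set.Ioc 1 (Real.exp 1)}
      = Set.Ioc (1 / c) (Real.exp 1 / c) := by
    ext r
    simp only [Set.mem_setOf_eq, Set.mem_Ioc]
    rw [div_lt_iff₀ hc, le_div_iff₀ hc]
  rw [hset, drr_Ioc (by positivity) (by gcongr; exact one_le_exp_one)]
  have : Real.exp 1 / c / (1 / c) = Real.exp 1 := by field_simp
  rw [this, Real.log_exp, ENNReal.ofReal_one]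

lemma sigmaFinite_aux (nubar : Measure (Fin 2 → ℝ)) (hzero : nubar {0} = 0)
    (hloc : ∀ K : Set (Fin 2 → ℝ), IsCompact K → (0 : Fin 2 → ℝ) ∉ K → nubar K < ⊤) :
    SigmaFinite nubar := by
  refine ⟨⟨⟨fun n => {0} ∪ (Metric.closedBall (0 : Fin 2 → ℝ) n ∩
      (Metric.ball (0 : Fin 2 → ℝ) (1 / (n + 1)))ᶜ), fun _ => trivial, fun n => ?_, ?_⟩⟩⟩
  · refine lt_of_le_of_lt (measure_union_le _ _) ?_
    rw [hzero, zero_add]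
    refine hloc _ ((isCompact_closedBall _ _).inter_right
      Metric.isOpen_ball.isClosed_compl) fun h => ?_
    exact h.2 (Metric.mem_ball_self (by positivity))
  · rw [Set.iUnion_eq_univ_iff]
    intro x
    by_cases hx : x = 0
    · exact ⟨0, Or.inl hx⟩
    · have hnorm : 0 < ‖x‖ := norm_pos_iff.mpr hx
      obtain ⟨n1, hn1⟩ := exists_nat_gt ‖x‖
      obtain ⟨n2, hn2⟩ := exists_nat_one_div_lt hnorm
      refine ⟨max n1 n2, Or.inr ⟨?_, ?_⟩⟩
      · rw [Metric.mem_closedBall, dist_zero_right]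
        exact le_trans hn1.le (Nat.cast_le.mpr (le_max_left _ _))
      · intro h
        rw [Metric.mem_ball, dist_zero_right] at h
        have h2 : (1 : ℝ) / (max n1 n2 + 1) ≤ 1 / (n2 + 1) := by
          apply one_div_le_one_div_of_le (by positivity)
          have : (n2 : ℝ) ≤ max n1 n2 := Nat.cast_le.mpr (le_max_right _ _)
          linarith
        have := lt_of_lt_of_le h h2
        linarith

end AngularAux
/-- **Lemma (stationarity descends to the angular part).** Let `μ` be a Borel probability
measure on `SL(2,ℝ)` and `ν̄` a locally finite `μ`-stationary Borel measure on `ℝ² \ {0}`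
whose pushforward under `x ↦ (|x|, [x])` is the product of `dr/r` with a Borel probability
measure `ν` on `ℙ¹(ℝ)`.  Then `ν` is `μ`-stationary for the projective action:
`∫ g_*ν dμ(g) = ν`. -/
theorem angular_part_stationary (μ : Measure SL(2, ℝ)) [IsProbabilityMeasure μ]
    (nubar : Measure (Fin 2 → ℝ)) (hzero : nubar {0} = 0)
    (hloc : ∀ K : Set (Fin 2 → ℝ), IsCompact K → (0 : Fin 2 → ℝ) ∉ K → nubar K < ⊤)
    (hstat : planeConv μ nubar = nubar)
    (ν : Measure Proj) [IsProbabilityMeasure ν]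
    (hdec : Measure.map polarMap nubar = drr.prod ν) :
    projConv μ ν = ν := by
  classical
  open AngularAux in
  haveI : SigmaFinite nubar := sigmaFinite_aux nubar hzero hloc
  refine Measure.ext fun A hA => ?_
  set I : Set ℝ := Set.Ioc 1 (Real.exp 1) with hIdef
  have hIA : MeasurableSet (I ×ˢ A) := measurableSet_Ioc.prod hA
  have hS : MeasurableSet (polarMap ⁻¹' (I ×ˢ A)) := measurable_polarMap hIA
  have key : ∀ g : SL(2, ℝ),
      nubar ((fun x => (g : Matrix (Fin 2) (Fin 2) ℝ).mulVec x) ⁻¹' (polarMap ⁻¹' (I ×ˢ A)))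
        = ν (projAct g ⁻¹' A) := by
    intro g
    have hT : MeasurableSet {q : ℝ × Proj | q.1 * cfun g q.2 ∈ I ∧ projAct g q.2 ∈ A} := by
      have h1 : MeasurableSet {q : ℝ × Proj | q.1 * cfun g q.2 ∈ I} :=
        (measurable_fst.mul ((measurable_cfun g).comp measurable_snd)) measurableSet_Ioc
      have h2 : MeasurableSet {q : ℝ × Proj | projAct g q.2 ∈ A} :=
        ((measurable_projAct g).comp measurable_snd) hA
      exact h1.inter h2
    have hset : (fun x => (g : Matrix (Fin 2) (Fin 2) ℝ).mulVec x) ⁻¹' (polarMap ⁻¹' (I ×ˢ A))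
        = polarMap ⁻¹' {q : ℝ × Proj | q.1 * cfun g q.2 ∈ I ∧ projAct g q.2 ∈ A} := by
      ext x
      simp only [Set.mem_preimage, polarMap_eq, Set.mem_prod, Set.mem_setOf_eq]
      by_cases hx : x = 0
      · subst hx
        rw [Matrix.mulVec_zero]
        simp only [vecNorm_zero, zero_mul, hIdef, Set.mem_Ioc]
        norm_num
      · have hgx := mulVec_ne_zero g hx
        rw [pangle_eq _ hx, pangle_eq _ hgx, vecNorm_mulVec g hx, projAct_mk g hx]
    rw [hset, ← Measure.map_apply measurable_polarMap hT, hdec, Measure.prod_apply_symm hT]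
    have hslice : ∀ p : Proj,
        drr ((fun r => (r, p)) ⁻¹'
            {q : ℝ × Proj | q.1 * cfun g q.2 ∈ I ∧ projAct g q.2 ∈ A})
          = Set.indicator (projAct g ⁻¹' A) 1 p := by
      intro p
      by_cases hp : projAct g p ∈ A
      · rw [Set.indicator_of_mem (show p ∈ projAct g ⁻¹' A from hp)]
        have heq : (fun r : ℝ => (r, p)) ⁻¹'
            {q : ℝ × Proj | q.1 * cfun g q.2 ∈ I ∧ projAct g q.2 ∈ A}
            = {r : ℝ | r * cfun g p ∈ I} := by
          ext r; simp [hp]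
        rw [heq, hIdef]
        exact drr_scaled (cfun_pos g p)
      · rw [Set.indicator_of_notMem (show p ∉ projAct g ⁻¹' A from hp)]
        have heq : (fun r : ℝ => (r, p)) ⁻¹'
            {q : ℝ × Proj | q.1 * cfun g q.2 ∈ I ∧ projAct g q.2 ∈ A} = (∅ : Set ℝ) := by
          ext r; simp [hp]
        rw [heq]
        exact measure_empty
    rw [lintegral_congr hslice, lintegral_indicator_one ((measurable_projAct g) hA)]
  calc projConv μ ν A
      = ∫⁻ g, ν (projAct g ⁻¹' A) ∂μ := by
        rw [projConv, Measure.map_apply measurable_Phi hA,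
          Measure.prod_apply (measurable_Phi hA)]
        rfl
    _ = ∫⁻ g, nubar ((fun x => (g : Matrix (Fin 2) (Fin 2) ℝ).mulVec x) ⁻¹'
          (polarMap ⁻¹' (I ×ˢ A))) ∂μ := (lintegral_congr key).symm
    _ = planeConv μ nubar (polarMap ⁻¹' (I ×ˢ A)) := by
        rw [planeConv, Measure.map_apply measurable_mv hS, Measure.prod_apply (measurable_mv hS)]
        rfl
    _ = nubar (polarMap ⁻¹' (I ×ˢ A)) := by rw [hstat]
    _ = (drr.prod ν) (I ×ˢ A) := by rw [← hdec, Measure.map_apply measurable_polarMap hIA]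
    _ = drr I * ν A := Measure.prod_prod _ _
    _ = ν A := by rw [hIdef, drr_Ioc_one, one_mul]
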